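/- Let (G,P) be a quasi-lattice ordered group and let x ∈ PP⁻¹. Then there is a unique pair a, b ∈ P such that x = ab⁻¹ and a ∧ᵣ b = 1, and this pair is precisely the minimal pair for x: for every u, v ∈ P with x = uv⁻¹ one has a ≤ u and b ≤ v. -/

import Mathlib

section Order

variable {H : Type*} [Group H]

/-- `x ≤ y` in the left-invariant partial order determined by the cone `P`. -/
def lle (P : Submonoid H) (x y : H) : Prop := x⁻¹ * y ∈ P

/-- `x ≤ᵣ y` in the right-invariant partial order determined by the cone `P`. -/
def rle (P : Submonoid H) (x y : H) : Prop := y * x⁻¹ ∈ P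

/-- `x` and `y` have a common upper bound for the left-invariant order. -/
def HasUB (P : Submonoid H) (x y : H) : Prop := ∃ z, lle P x z ∧ lle P y z

/-- `m` is a least upper bound of `x` and `y` for the left-invariant order. -/
def IsLub' (P : Submonoid H) (x y m : H) : Prop :=
  lle P x m ∧ lle P y m ∧ ∀ w, lle P x w → lle P y w → lle P m w

/-- `w` is a greatest lower bound of `u` and `v` for the right-invariant order
(greatest among *all* common right lower bounds in the group). -/
def IsRGlb (P : Submonoid H) (u v w : H) : Prop :=
  rle P w u ∧ rle P w v ∧ ∀ z, rle P z u → rle P z v → rle P z w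

/-- `(H,P)` is a partially ordered group: `P ∩ P⁻¹ = {1}`. -/
def IsPoGroup (P : Submonoid H) : Prop := ∀ x : H, x ∈ P → x⁻¹ ∈ P → x = 1

/-- `(H,P)` is a quasi-lattice ordered group: it is a partially ordered group in which
every pair of elements with a common upper bound has a least upper bound. -/
def IsQLO (P : Submonoid H) : Prop :=
  IsPoGroup P ∧ ∀ x y : H, HasUB P x y → ∃ m, IsLub' P x y m

end Order


/-!
The minimal pair for `x` is `(x ∨ 1, x⁻¹ (x ∨ 1))`: writing `x = u v⁻¹` with `u, v ∈ P` is the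
same as choosing a common upper bound `u` of `x` and `1` (then `v = x⁻¹ u`), and the lub exists
because `x ∈ PP⁻¹` provides one such bound. The minimal pair `(a, b)` is reduced, since a common
right lower bound `z` of `a` and `b` yields the fraction `x = (a z⁻¹)(b z⁻¹)⁻¹`, and minimality
gives `a ≤ a z⁻¹`, i.e. `z ≤ᵣ 1`. Conversely a reduced pair `(a', b')` equals `(a c, b c)` with
`c = a⁻¹ a' ∈ P` by minimality; then `c` is a common right lower bound of `a'` and `b'`, so
`c ≤ᵣ 1`, and `c = 1` because `P ∩ P⁻¹ = {1}`.
-/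

section Fractions

variable {H : Type*} [Group H] {P : Submonoid H}

theorem lle_mul_left_iff (g a b : H) : lle P (g * a) (g * b) ↔ lle P a b := by
  simp only [lle, mul_inv_rev, mul_assoc, inv_mul_cancel_left]

theorem one_lle_iff {a : H} : lle P 1 a ↔ a ∈ P := by
  simp only [lle, inv_one, one_mul]

theorem rle_one_iff {z : H} : rle P z 1 ↔ z⁻¹ ∈ P := by
  simp only [rle, one_mul]

theorem one_rle_iff {a : H} : rle P 1 a ↔ a ∈ P := by
  simp only [rle, inv_one, mul_one]

theorem rle_mul_self_iff {a c : H} : rle P c (a * c) ↔ a ∈ P := by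
  simp only [rle, mul_inv_cancel_right]

theorem lle_iff_of_eq_mul_inv {x u v : H} (hx : x = u * v⁻¹) : lle P x u ↔ v ∈ P := by
  simp only [lle, hx, mul_inv_rev, inv_inv, inv_mul_cancel_right]

theorem hasUB_one_of_eq_mul_inv {x u v : H} (hu : u ∈ P) (hv : v ∈ P) (hx : x = u * v⁻¹) :
    HasUB P x 1 :=
  ⟨u, (lle_iff_of_eq_mul_inv hx).2 hv, one_lle_iff.2 hu⟩

theorem IsLub'.lle_of_eq_mul_inv {x m u v : H} (hm : IsLub' P x 1 m) (hu : u ∈ P) (hv : v ∈ P)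
    (hx : x = u * v⁻¹) : lle P m u ∧ lle P (x⁻¹ * m) v := by
  have hmu : lle P m u := hm.2.2 u ((lle_iff_of_eq_mul_inv hx).2 hv) (one_lle_iff.2 hu)
  refine ⟨hmu, ?_⟩
  have hv' : v = x⁻¹ * u := by rw [hx]; group
  rwa [hv', lle_mul_left_iff]

theorem IsLub'.isRGlb_one {x m : H} (hm : IsLub' P x 1 m) : IsRGlb P m (x⁻¹ * m) 1 := by
  have hmP : m ∈ P := one_lle_iff.1 hm.2.1
  have hbP : x⁻¹ * m ∈ P := hm.1
  refine ⟨one_rle_iff.2 hmP, one_rle_iff.2 hbP, fun z hza hzb => ?_⟩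
  have hx : x = m * z⁻¹ * (x⁻¹ * m * z⁻¹)⁻¹ := by group
  have hmin : lle P (m * 1) (m * z⁻¹) := by
    rw [mul_one]; exact (hm.lle_of_eq_mul_inv hza hzb hx).1
  exact rle_one_iff.2 (one_lle_iff.1 ((lle_mul_left_iff m 1 z⁻¹).1 hmin))

theorem IsPoGroup.eq_of_lle_of_isRGlb_one (hpo : IsPoGroup P) {a b a' b' : H} (ha : a ∈ P)
    (hb : b ∈ P) (hlle : lle P a a') (heq : a * b⁻¹ = a' * b'⁻¹) (hglb : IsRGlb P a' b' 1) :
    a' = a ∧ b' = b := by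
  set c := a⁻¹ * a' with hc
  have ha' : a' = a * c := by rw [hc]; group
  have hb' : b' = b * c := by
    calc b' = (a' * b'⁻¹)⁻¹ * a' := by group
      _ = b * c := by rw [← heq, hc]; group
  have hc1 : rle P c 1 :=
    hglb.2.2 c (ha' ▸ rle_mul_self_iff.2 ha) (hb' ▸ rle_mul_self_iff.2 hb)
  have hc_one : c = 1 := hpo c hlle (rle_one_iff.1 hc1)
  exact ⟨by rw [ha', hc_one, mul_one], by rw [hb', hc_one, mul_one]⟩

end Fractions

/-- In a quasi-lattice ordered group `(H,P)`, every `x ∈ PP⁻¹` admits a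
unique pair `a, b ∈ P` with `x = ab⁻¹` and `a ∧ᵣ b = 1`, and this pair is the minimal
pair for `x`: whenever `x = uv⁻¹` with `u, v ∈ P` one has `a ≤ u` and `b ≤ v`. -/
theorem unique_reduced_fraction {H : Type*} [Group H] (P : Submonoid H)
    (hqlo : IsQLO P) (x : H) (hx : ∃ u ∈ P, ∃ v ∈ P, x = u * v⁻¹) :
    ∃ a b : H, (a ∈ P ∧ b ∈ P ∧ x = a * b⁻¹ ∧ IsRGlb P a b 1) ∧
      (∀ u v : H, u ∈ P → v ∈ P → x = u * v⁻¹ → lle P a u ∧ lle P b v) ∧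
      (∀ a' b' : H, a' ∈ P → b' ∈ P → x = a' * b'⁻¹ → IsRGlb P a' b' 1 →
        a' = a ∧ b' = b) := by
  obtain ⟨u, hu, v, hv, hxuv⟩ := hx
  obtain ⟨hpo, hlub⟩ := hqlo
  obtain ⟨m, hm⟩ := hlub x 1 (hasUB_one_of_eq_mul_inv hu hv hxuv)
  have hmP : m ∈ P := one_lle_iff.1 hm.2.1
  have hbP : x⁻¹ * m ∈ P := hm.1
  have hx : x = m * (x⁻¹ * m)⁻¹ := by group
  refine ⟨m, x⁻¹ * m, ⟨hmP, hbP, hx, hm.isRGlb_one⟩,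
    fun u v hu hv hxuv => hm.lle_of_eq_mul_inv hu hv hxuv,
    fun a' b' ha' hb' hxab' hglb => hpo.eq_of_lle_of_isRGlb_one hmP hbP
      (hm.lle_of_eq_mul_inv ha' hb' hxab').1 (hx.symm.trans hxab') hglb⟩
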